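/- Let f : [a,b] → ℝ be continuous with 0 ≤ a < b < ∞, let l > 1, and let p, q > 0. If |f|^l is P-convex on [a,b], then ∫_a^b (x-a)^p (b-x)^q f(x) dx ≤ (b-a)^(p+q+1) · B(p+1, q+1) · (|f(a)|^l + |f(b)|^l)^(1/l). -/

import Mathlib

/-
Writing `x = t b + (1 - t) a`, P-convexity of `|f|^l` gives `|f x|^l ≤ |f a|^l + |f b|^l`, so `f` is
bounded on `[a, b]` by `M = (|f a|^l + |f b|^l)^(1/l)`. Integrating against the nonnegative weight
`(x - a)^p (b - x)^q` and substituting `x = a + (b - a) t` turns the weight integral into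
`(b - a)^(p + q + 1) B(p + 1, q + 1)`.
-/

noncomputable def eulerBeta (x y : ℝ) : ℝ :=
  ∫ t in (0:ℝ)..1, t ^ (x - 1) * (1 - t) ^ (y - 1)

open Set

def PConvexOn (s : Set ℝ) (g : ℝ → ℝ) : Prop :=
  ∀ x ∈ s, ∀ y ∈ s, ∀ t ∈ Icc (0:ℝ) 1, g (t * x + (1 - t) * y) ≤ g x + g y

theorem PConvexOn.le_add_of_mem_Icc {g : ℝ → ℝ} {a b x : ℝ} (hg : PConvexOn (Icc a b) g)
    (hx : x ∈ Icc a b) : g x ≤ g a + g b := by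
  have hab : a ≤ b := hx.1.trans hx.2
  rw [← segment_eq_Icc hab] at hx
  obtain ⟨s, t, hs, ht, hst, rfl⟩ := hx
  have h := hg a (left_mem_Icc.2 hab) b (right_mem_Icc.2 hab) s ⟨hs, by linarith⟩
  rwa [show 1 - s = t by linarith] at h

theorem abs_le_of_pConvexOn_abs_rpow {f : ℝ → ℝ} {a b l x : ℝ} (hl : 0 < l)
    (hf : PConvexOn (Icc a b) fun x => |f x| ^ l) (hx : x ∈ Icc a b) :
    |f x| ≤ (|f a| ^ l + |f b| ^ l) ^ (1 / l) := by
  rw [one_div, Real.le_rpow_inv_iff_of_pos (abs_nonneg _) (by positivity) hl]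
  exact hf.le_add_of_mem_Icc hx

theorem integral_sub_rpow_mul_sub_rpow {a b : ℝ} (hab : a < b) (p q : ℝ) :
    ∫ x in a..b, (x - a) ^ p * (b - x) ^ q =
      (b - a) ^ (p + q + 1) * eulerBeta (p + 1) (q + 1) := by
  have hba : 0 < b - a := sub_pos.2 hab
  have hsubst := intervalIntegral.smul_integral_comp_add_mul (a := 0) (b := 1)
    (fun x => (x - a) ^ p * (b - x) ^ q) (b - a) a
  simp only [mul_zero, add_zero, mul_one, add_sub_cancel, smul_eq_mul] at hsubst
  have hweight : ∀ t ∈ uIcc (0:ℝ) 1, (a + (b - a) * t - a) ^ p * (b - (a + (b - a) * t)) ^ q =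
      (b - a) ^ (p + q) * (t ^ (p + 1 - 1) * (1 - t) ^ (q + 1 - 1)) := by
    intro t ht
    rw [uIcc_of_le zero_le_one] at ht
    rw [show a + (b - a) * t - a = (b - a) * t by ring,
      show b - (a + (b - a) * t) = (b - a) * (1 - t) by ring,
      Real.mul_rpow hba.le ht.1, Real.mul_rpow hba.le (by linarith [ht.2]), Real.rpow_add hba]
    ring_nf
  rw [← hsubst, intervalIntegral.integral_congr hweight, intervalIntegral.integral_const_mul,
    Real.rpow_add_one hba.ne']
  unfold eulerBeta
  ring

theorem stmt6_general (a b p q l : ℝ) (f : ℝ → ℝ) (hab : a < b)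
    (hf : ContinuousOn f (Set.Icc a b)) (hl : 1 < l) (hp : 0 < p) (hq : 0 < q)
    (hpc : ∀ x ∈ Set.Icc a b, ∀ y ∈ Set.Icc a b, ∀ t ∈ Set.Icc (0:ℝ) 1,
      |f (t * x + (1 - t) * y)| ^ l ≤ |f x| ^ l + |f y| ^ l) :
    ∫ x in a..b, (x - a) ^ p * (b - x) ^ q * f x ≤
      (b - a) ^ (p + q + 1) * eulerBeta (p + 1) (q + 1) *
        (|f a| ^ l + |f b| ^ l) ^ (1 / l) := by
  set M := (|f a| ^ l + |f b| ^ l) ^ (1 / l)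
  have hw : Continuous fun x : ℝ => (x - a) ^ p * (b - x) ^ q :=
    ((Real.continuous_rpow_const hp.le).comp (continuous_id.sub continuous_const)).mul
      ((Real.continuous_rpow_const hq.le).comp (continuous_const.sub continuous_id))
  have hbound : ∀ x ∈ Icc a b, (x - a) ^ p * (b - x) ^ q * f x ≤ (x - a) ^ p * (b - x) ^ q * M :=
    fun x hx => mul_le_mul_of_nonneg_left
      ((le_abs_self _).trans (abs_le_of_pConvexOn_abs_rpow (by linarith) hpc hx))
      (mul_nonneg (Real.rpow_nonneg (by linarith [hx.1]) _)
        (Real.rpow_nonneg (by linarith [hx.2]) _))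
  calc ∫ x in a..b, (x - a) ^ p * (b - x) ^ q * f x
      ≤ ∫ x in a..b, (x - a) ^ p * (b - x) ^ q * M :=
        intervalIntegral.integral_mono_on hab.le
          ((hw.continuousOn.mul hf).intervalIntegrable_of_Icc hab.le)
          ((hw.mul continuous_const).intervalIntegrable _ _) hbound
    _ = (b - a) ^ (p + q + 1) * eulerBeta (p + 1) (q + 1) * M := by
        rw [intervalIntegral.integral_mul_const, integral_sub_rpow_mul_sub_rpow hab]

theorem stmt6 (a b p q l : ℝ) (f : ℝ → ℝ) (ha : 0 ≤ a) (hab : a < b)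
    (hf : ContinuousOn f (Set.Icc a b)) (hl : 1 < l) (hp : 0 < p) (hq : 0 < q)
    (hpc : ∀ x ∈ Set.Icc a b, ∀ y ∈ Set.Icc a b, ∀ t ∈ Set.Icc (0:ℝ) 1,
      |f (t * x + (1 - t) * y)| ^ l ≤ |f x| ^ l + |f y| ^ l) :
    ∫ x in a..b, (x - a) ^ p * (b - x) ^ q * f x ≤
      (b - a) ^ (p + q + 1) * eulerBeta (p + 1) (q + 1) *
        (|f a| ^ l + |f b| ^ l) ^ (1 / l) :=
  stmt6_general a b p q l f hab hf hl hp hq hpc
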